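/- arXiv:2110.01173 — 10 statements merged into one kernel-verified Lean document; each statement's English description precedes it below -/
import Mathlib

section
/- Let a, b, c be rational numbers with a ≠ 0 and let y be a complex number. Then the three equations y³ + 1 = 0, y³ + b·y² + a·y + c = 0, and y³ + 3a²·y² + 3b²·y + c² = 0 hold simultaneously if and only if y = −1 and either (b = a and c = 1) or (b = −2a−1 and c = 3a+2). -/
theorem stmt_1 (a b c : ℚ) (ha : a ≠ 0) (y : ℂ) :
    (y ^ 3 + 1 = 0 ∧
     y ^ 3 + (b : ℂ) * y ^ 2 + (a : ℂ) * y + (c : ℂ) = 0 ∧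
     y ^ 3 + 3 * (a : ℂ) ^ 2 * y ^ 2 + 3 * (b : ℂ) ^ 2 * y + (c : ℂ) ^ 2 = 0) ↔
    (y = -1 ∧ ((b = a ∧ c = 1) ∨ (b = -2 * a - 1 ∧ c = 3 * a + 2))) := by
  constructor
  · rintro ⟨h1, h2, h3⟩
    by_cases hy : y = -1
    · subst hy
      refine ⟨rfl, ?_⟩
      have e2 : ((b - a + c - 1 : ℚ) : ℂ) = 0 := by push_cast; linear_combination h2
      have e3 : ((3 * a ^ 2 - 3 * b ^ 2 + c ^ 2 - 1 : ℚ) : ℂ) = 0 := by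
        push_cast; linear_combination h3
      have q2 : b - a + c - 1 = 0 := by exact_mod_cast e2
      have q3 : 3 * a ^ 2 - 3 * b ^ 2 + c ^ 2 - 1 = 0 := by exact_mod_cast e3
      have hc : c = 1 + a - b := by linarith
      have hf : (a - b) * (2 * (2 * a + b + 1)) = 0 := by
        have := q3
        rw [hc] at this
        nlinarith [this]
      rcases mul_eq_zero.1 hf with h | h
      · left
        have hb : b = a := by linarith
        exact ⟨hb, by rw [hc, hb]; ring⟩
      · right
        have hb : b = -2 * a - 1 := by linarith
        exact ⟨hb, by rw [hc, hb]; ring⟩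
    · exfalso
      have hy1 : y + 1 ≠ 0 := fun h => hy (by linear_combination h)
      have hq : y ^ 2 - y + 1 = 0 := by
        have : (y + 1) * (y ^ 2 - y + 1) = 0 := by linear_combination h1
        rcases mul_eq_zero.1 this with h | h
        · exact absurd h hy1
        · exact h
      have him : y.im ≠ 0 := by
        intro h0
        have hre := congrArg Complex.re hq
        simp [Complex.sub_re, Complex.add_re, pow_two, Complex.mul_re, h0] at hre
        nlinarith [hre]
      have hL : ((a : ℂ) + b) * y + ((c : ℂ) - 1 - b) = 0 := by
        linear_combination h2 - h1 - (b : ℂ) * hq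
      have hM : (3 * (a : ℂ) ^ 2 + 3 * (b : ℂ) ^ 2) * y
          + ((c : ℂ) ^ 2 - 1 - 3 * (a : ℂ) ^ 2) = 0 := by
        linear_combination h3 - h1 - 3 * (a : ℂ) ^ 2 * hq
      have iL := congrArg Complex.im hL
      have iM := congrArg Complex.im hM
      simp [Complex.add_im, Complex.sub_im, Complex.mul_im, Complex.mul_re,
        Complex.ratCast_im, Complex.ratCast_re, pow_two] at iL iM
      have hab : (a : ℝ) + b = 0 := by
        rcases iL with h | h
        · exact_mod_cast h
        · exact absurd h him
      have habs : 3 * (a : ℝ) ^ 2 + 3 * (b : ℝ) ^ 2 = 0 := by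
        rcases iM with h | h
        · nlinarith [h]
        · exact absurd h him
      have : (a : ℝ) = 0 := by nlinarith [sq_nonneg ((a : ℝ) - b)]
      exact ha (by exact_mod_cast this)
  · rintro ⟨rfl, ⟨rfl, rfl⟩ | ⟨rfl, rfl⟩⟩ <;>
      refine ⟨by ring, by push_cast; ring, by push_cast; ring⟩
end

section
/- Let a, b, c be rational numbers with c ≠ ab, and let λ, μ be complex numbers satisfying λ + μ = 1 + c and λ·μ = c − ab (i.e., λ and μ are the eigenvalues of the matrix [[1, b], [a, c]]). Then μ ≠ 0, and if there exists a positive integer n with λⁿ = μⁿ (i.e., the ratio λ/μ is a root of unity), then at least one of the following holds: c + 1 = 0, or ab + c² + c + 1 = 0, or 2ab + c² + 1 = 0, or 3ab + c² − c + 1 = 0, or 4ab + c² − 2c + 1 = 0. -/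
/-!
`ζ = λ / μ` is a root of unity, so `ζ + ζ⁻¹` is an algebraic integer of absolute value at most `2`.
By Vieta it equals the rational number `((1 + c)² - 2(c - ab)) / (c - ab)`, hence it is an integer
`m ∈ {-2, …, 2}`, and each value of `m` in `(1 + c)² = (m + 2)(c - ab)` gives one of the five
equations.
-/

theorem isIntegral_of_pow_eq_one {R A : Type*} [CommRing R] [CommRing A] [Algebra R A] {x : A}
    {n : ℕ} (hn : 0 < n) (hx : x ^ n = 1) : IsIntegral R x :=
  IsIntegral.of_pow hn (hx ▸ isIntegral_one)

theorem Complex.exists_int_abs_le_two_of_add_inv_eq_ratCast {ζ : ℂ} {n : ℕ} (hn : 0 < n) (hζ : ζ ^ n = 1)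
    {q : ℚ} (hq : ζ + ζ⁻¹ = q) : ∃ m : ℤ, |m| ≤ 2 ∧ q = m := by
  have hint : IsIntegral ℤ (ζ + ζ⁻¹) :=
    (isIntegral_of_pow_eq_one hn hζ).add
      (isIntegral_of_pow_eq_one hn (by rw [inv_pow, hζ, inv_one]))
  obtain ⟨m, hm⟩ := hint.exists_int_iff_exists_rat.mp ⟨q, hq⟩
  have hqm : q = m := by exact_mod_cast hq.symm.trans hm
  refine ⟨m, ?_, hqm⟩
  have hnorm : ‖ζ‖ = 1 := Complex.norm_eq_one_of_pow_eq_one hζ hn.ne'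
  have : ‖(m : ℂ)‖ ≤ 2 := calc
    ‖(m : ℂ)‖ = ‖ζ + ζ⁻¹‖ := by rw [hm]
    _ ≤ ‖ζ‖ + ‖ζ⁻¹‖ := norm_add_le _ _
    _ = 2 := by rw [norm_inv, hnorm]; norm_num
  rw [Complex.norm_intCast] at this
  exact_mod_cast this

theorem div_add_div_eq_of_add_eq_of_mul_eq {K : Type*} [Field K] {x y s p : K} (hs : x + y = s)
    (hp : x * y = p) (hp0 : p ≠ 0) : x / y + y / x = (s ^ 2 - 2 * p) / p := by
  have hx : x ≠ 0 := left_ne_zero_of_mul (hp ▸ hp0)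
  have hy : y ≠ 0 := right_ne_zero_of_mul (hp ▸ hp0)
  rw [← hs, ← hp]
  field_simp
  ring

theorem stmt_2 (a b c : ℚ) (h : c ≠ a * b) (lam mu : ℂ)
    (hsum : lam + mu = 1 + (c : ℂ)) (hprod : lam * mu = (c : ℂ) - (a : ℂ) * b) :
    mu ≠ 0 ∧
    ((∃ n : ℕ, 0 < n ∧ lam ^ n = mu ^ n) →
      (c + 1 = 0 ∨ a * b + c ^ 2 + c + 1 = 0 ∨ 2 * a * b + c ^ 2 + 1 = 0 ∨
       3 * a * b + c ^ 2 - c + 1 = 0 ∨ 4 * a * b + c ^ 2 - 2 * c + 1 = 0)) := by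
  have hp : c - a * b ≠ 0 := sub_ne_zero.mpr h
  have hpC : (c : ℂ) - a * b ≠ 0 := by exact_mod_cast hp
  have hmu : mu ≠ 0 := right_ne_zero_of_mul (hprod ▸ hpC)
  refine ⟨hmu, fun ⟨n, hn, hpow⟩ => ?_⟩
  have hζ : (lam / mu) ^ n = 1 := by rw [div_pow, hpow, div_self (pow_ne_zero n hmu)]
  obtain ⟨m, hm, hq⟩ := Complex.exists_int_abs_le_two_of_add_inv_eq_ratCast hn hζ
    (q := ((1 + c) ^ 2 - 2 * (c - a * b)) / (c - a * b))
    (by rw [inv_div, div_add_div_eq_of_add_eq_of_mul_eq hsum hprod hpC]; push_cast; rfl)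
  have hkey : (1 + c) ^ 2 = (m + 2) * (c - a * b) := by
    rw [div_eq_iff hp] at hq
    linear_combination hq
  obtain ⟨hlo, hhi⟩ := abs_le.mp hm
  interval_cases m <;> push_cast at hkey
  · left; nlinarith
  · right; left; linear_combination hkey
  · right; right; left; linear_combination hkey
  · right; right; right; left; linear_combination hkey
  · right; right; right; right; linear_combination hkey
end

section
/- Let w, a', b', c' be rational numbers with w·c' ≠ a'·b', and let λ', μ' be complex numbers satisfying λ' + μ' = w + c' and λ'·μ' = w·c' − a'·b' (i.e., λ' and μ' are the eigenvalues of the matrix [[w, b'], [a', c']]). Set A = w + c' and B = (c' − w)² + 4a'b'. Then μ' ≠ 0, and if there exists a positive integer n with (λ')ⁿ = (μ')ⁿ (i.e., the ratio λ'/μ' is a root of unity), then at least one of the following holds: A = 0, B = 0, A² + B = 0, A² + 3B = 0, or 3A² + B = 0. -/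
/-!
The ratio `r = λ'/μ'` is a root of unity, so `r + r⁻¹` is an algebraic integer of absolute value
at most `2`. On the other hand `r + r⁻¹ = (A² - 2C)/C` with `C = λ'μ' = wc' - a'b'` is rational,
hence an integer `z ∈ {-2, …, 2}`. Since `B = A² - 4C`, the relation `A² - 2C = zC` becomes
`2(A² + B) = z(A² - B)`, and the five values of `z` give the five alternatives.
-/

lemma Complex.isIntegral_add_inv_of_pow_eq_one {r : ℂ} {n : ℕ} (hn : 0 < n) (hr : r ^ n = 1) :
    IsIntegral ℤ (r + r⁻¹) :=
  have hint : IsIntegral ℤ r := .of_pow hn (hr ▸ isIntegral_one)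
  have hint_inv : IsIntegral ℤ r⁻¹ := .of_pow hn (by rw [inv_pow, hr, inv_one]; exact isIntegral_one)
  hint.add hint_inv

lemma Complex.norm_add_inv_le_two_of_pow_eq_one {r : ℂ} {n : ℕ} (hn : 0 < n) (hr : r ^ n = 1) :
    ‖r + r⁻¹‖ ≤ 2 := by
  have hnorm : ‖r‖ = 1 := Complex.norm_eq_one_of_pow_eq_one hr hn.ne'
  calc ‖r + r⁻¹‖ ≤ ‖r‖ + ‖r⁻¹‖ := norm_add_le _ _
    _ = 2 := by rw [norm_inv, hnorm]; norm_num

lemma Rat.exists_int_eq_of_isIntegral_complex {q : ℚ} (hq : IsIntegral ℤ (q : ℂ)) :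
    ∃ z : ℤ, (z : ℚ) = q := by
  rw [← eq_ratCast (algebraMap ℚ ℂ) q, isIntegral_algebraMap_iff (algebraMap ℚ ℂ).injective] at hq
  exact IsIntegrallyClosed.isIntegral_iff.mp hq

lemma Complex.exists_int_eq_add_inv_of_pow_eq_one {r : ℂ} {n : ℕ} (hn : 0 < n) (hr : r ^ n = 1)
    {q : ℚ} (hq : r + r⁻¹ = q) : ∃ z : ℤ, (z : ℚ) = q ∧ |z| ≤ 2 := by
  obtain ⟨z, rfl⟩ := Rat.exists_int_eq_of_isIntegral_complex
    (hq ▸ Complex.isIntegral_add_inv_of_pow_eq_one hn hr)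
  refine ⟨z, rfl, ?_⟩
  have hle := Complex.norm_add_inv_le_two_of_pow_eq_one hn hr
  rw [hq, show ((z : ℚ) : ℂ) = ((z : ℝ) : ℂ) by push_cast; rfl, Complex.norm_real,
    Real.norm_eq_abs] at hle
  exact_mod_cast hle

lemma eq_zero_or_of_two_mul_add_eq_int_mul_sub {K : Type*} [Field K] [CharZero K] (A B : K)
    {z : ℤ} (hz : |z| ≤ 2) (h : 2 * (A ^ 2 + B) = z * (A ^ 2 - B)) :
    A = 0 ∨ B = 0 ∨ A ^ 2 + B = 0 ∨ A ^ 2 + 3 * B = 0 ∨ 3 * A ^ 2 + B = 0 := by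
  obtain ⟨hz₁, hz₂⟩ := abs_le.mp hz
  interval_cases z <;> push_cast at h
  · left
    have hA : (4 : K) * A ^ 2 = 0 := by linear_combination h
    simpa using hA
  · right; right; right; right; linear_combination h
  · right; right; left; linear_combination h / 2
  · right; right; right; left; linear_combination h
  · right; left
    have hB : (4 : K) * B = 0 := by linear_combination h
    simpa using hB

theorem stmt_3 (w a' b' c' : ℚ) (h : w * c' ≠ a' * b') (lam mu : ℂ)
    (hsum : lam + mu = (w : ℂ) + (c' : ℂ))
    (hprod : lam * mu = (w : ℂ) * c' - (a' : ℂ) * b') :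
    mu ≠ 0 ∧
    ((∃ n : ℕ, 0 < n ∧ lam ^ n = mu ^ n) →
      (w + c' = 0 ∨ (c' - w) ^ 2 + 4 * a' * b' = 0 ∨
       (w + c') ^ 2 + ((c' - w) ^ 2 + 4 * a' * b') = 0 ∨
       (w + c') ^ 2 + 3 * ((c' - w) ^ 2 + 4 * a' * b') = 0 ∨
       3 * (w + c') ^ 2 + ((c' - w) ^ 2 + 4 * a' * b') = 0)) := by
  set C : ℚ := w * c' - a' * b'
  have hC : C ≠ 0 := sub_ne_zero.mpr h
  have hprodC : lam * mu = (C : ℂ) := by push_cast [C]; exact hprod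
  have hlam : lam ≠ 0 := left_ne_zero_of_mul (hprodC ▸ Rat.cast_ne_zero.mpr hC)
  have hmu : mu ≠ 0 := right_ne_zero_of_mul (hprodC ▸ Rat.cast_ne_zero.mpr hC)
  refine ⟨hmu, fun ⟨n, hn, hpow⟩ => ?_⟩
  have hroot : (lam / mu) ^ n = 1 := by rw [div_pow, hpow, div_self (pow_ne_zero _ hmu)]
  have htrace : lam / mu + (lam / mu)⁻¹ = (((w + c') ^ 2 - 2 * C) / C : ℚ) := by
    rw [inv_div, div_add_div _ _ hmu hlam, mul_comm mu lam, hprodC]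
    push_cast [C]
    congr 1
    linear_combination (lam + mu + w + c') * hsum - 2 * hprod
  obtain ⟨z, hzq, hz⟩ := Complex.exists_int_eq_add_inv_of_pow_eq_one hn hroot htrace
  apply eq_zero_or_of_two_mul_add_eq_int_mul_sub _ _ hz
  rw [eq_div_iff hC] at hzq
  linear_combination (-4) * hzq
end

section
/- Let a, b, c be rational numbers with a·b ≠ 0 satisfying a³ − b³ − ab(1−c) = 0 and a³ + ab + 2b³ = 0. Suppose in addition that at least one of the following holds: (i) c = ab; (ii) a + b² = 0; (iii) a³ − b³c + ab(c²−1) = 0; or (iv) f₁ = 0, where f₁ = a³ + 4a⁶ + 3a⁵b² + a³b³ − c − 4a³c + 6a⁴bc − 6a²b²c − b³c − 3a²b⁵c − 3a³c² − 3abc² − 4b³c² − a³b³c² − 6ab⁴c² − 4b⁶c² + 3c³ + 4a³c³ + 6a²b²c³ + 3b³c³ + a³c⁴ + 3abc⁴ + 4b³c⁴ − 3c⁵ − b³c⁵ + c⁷. Then (a,b,c) = (−1, 1, −1) or (a,b,c) = (−1/3, −1/3, 1). -/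
/-!
Subtracting the two constraints gives `b (ac - 2a - 3b²) = 0`, so `ac = 2a + 3b²`; with `p = a / b`
the constraint `a³ + ab + 2b³ = 0` then forces the rational parametrization
`a = -p² / (p³ + 2)`, `b = -p / (p³ + 2)`, `c = (2p³ + 1) / (p³ + 2)`.
At this point each exceptional condition becomes a polynomial equation in `s = p³` whose only
rational roots are `s = ±1`, that is `p = ±1`, giving the two listed signatures.
-/

def f₁ {K : Type*} [Field K] (a b c : K) : K :=
  a ^ 3 + 4 * a ^ 6 + 3 * a ^ 5 * b ^ 2 + a ^ 3 * b ^ 3 - c - 4 * a ^ 3 * c +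
    6 * a ^ 4 * b * c - 6 * a ^ 2 * b ^ 2 * c - b ^ 3 * c - 3 * a ^ 2 * b ^ 5 * c -
    3 * a ^ 3 * c ^ 2 - 3 * a * b * c ^ 2 - 4 * b ^ 3 * c ^ 2 -
    a ^ 3 * b ^ 3 * c ^ 2 - 6 * a * b ^ 4 * c ^ 2 - 4 * b ^ 6 * c ^ 2 +
    3 * c ^ 3 + 4 * a ^ 3 * c ^ 3 + 6 * a ^ 2 * b ^ 2 * c ^ 3 + 3 * b ^ 3 * c ^ 3 +
    a ^ 3 * c ^ 4 + 3 * a * b * c ^ 4 + 4 * b ^ 3 * c ^ 4 - 3 * c ^ 5 -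
    b ^ 3 * c ^ 5 + c ^ 7

section Parametrization

variable {K : Type*} [Field K]

lemma exists_param_of_con {a b c : K} (hab : a * b ≠ 0)
    (con1 : a ^ 3 - b ^ 3 - a * b * (1 - c) = 0) (con2 : a ^ 3 + a * b + 2 * b ^ 3 = 0) :
    ∃ p : K, p ≠ 0 ∧ p ^ 3 + 2 ≠ 0 ∧
      a = -p ^ 2 / (p ^ 3 + 2) ∧ b = -p / (p ^ 3 + 2) ∧ c = (2 * p ^ 3 + 1) / (p ^ 3 + 2) := by
  obtain ⟨ha, hb⟩ := mul_ne_zero_iff.mp hab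
  have hac : a * c = 2 * a + 3 * b ^ 2 := by
    have h : b * (a * c - 2 * a - 3 * b ^ 2) = 0 := by linear_combination con1 - con2
    linear_combination (mul_eq_zero.mp h).resolve_left hb
  have hp : a / b ≠ 0 := div_ne_zero ha hb
  have hbD : b * ((a / b) ^ 3 + 2) = -(a / b) := by
    field_simp
    linear_combination con2
  have hD : (a / b) ^ 3 + 2 ≠ 0 := fun h => hp (by simpa [h] using hbD.symm)
  refine ⟨a / b, hp, hD, ?_, ?_, ?_⟩
  · rw [eq_div_iff hD]
    field_simp
    linear_combination con2
  · rw [eq_div_iff hD, hbD]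
  · rw [eq_div_iff hD]
    field_simp
    linear_combination (c - 2) * con2 - b * hac

variable {p : K}

lemma c_sub_mul_param (hD : p ^ 3 + 2 ≠ 0) :
    (2 * p ^ 3 + 1) / (p ^ 3 + 2) - -p ^ 2 / (p ^ 3 + 2) * (-p / (p ^ 3 + 2)) =
      2 * (p ^ 3 + 1) ^ 2 / (p ^ 3 + 2) ^ 2 := by
  field_simp
  ring

lemma add_sq_param (hD : p ^ 3 + 2 ≠ 0) :
    -p ^ 2 / (p ^ 3 + 2) + (-p / (p ^ 3 + 2)) ^ 2 = -p ^ 2 * (p ^ 3 + 1) / (p ^ 3 + 2) ^ 2 := by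
  field_simp
  ring

lemma cond_iii_param (hD : p ^ 3 + 2 ≠ 0) :
    (-p ^ 2 / (p ^ 3 + 2)) ^ 3 - (-p / (p ^ 3 + 2)) ^ 3 * ((2 * p ^ 3 + 1) / (p ^ 3 + 2)) +
      -p ^ 2 / (p ^ 3 + 2) * (-p / (p ^ 3 + 2)) * (((2 * p ^ 3 + 1) / (p ^ 3 + 2)) ^ 2 - 1) =
      2 * p ^ 3 * (p ^ 3 - 1) * (p ^ 3 + 1) / (p ^ 3 + 2) ^ 4 := by
  field_simp
  ring

lemma f₁_param (hD : p ^ 3 + 2 ≠ 0) :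
    f₁ (-p ^ 2 / (p ^ 3 + 2)) (-p / (p ^ 3 + 2)) ((2 * p ^ 3 + 1) / (p ^ 3 + 2)) =
      2 * (p ^ 3 - 1) * (p ^ 3 + 1) ^ 3 *
        (27 * (p ^ 3) ^ 4 + 17 * (p ^ 3) ^ 3 - 52 * (p ^ 3) ^ 2 + 17 * p ^ 3 + 27) /
        (p ^ 3 + 2) ^ 8 := by
  unfold f₁
  field_simp
  ring

end Parametrization

lemma quartic_ne_zero (s : ℚ) : 27 * s ^ 4 + 17 * s ^ 3 - 52 * s ^ 2 + 17 * s + 27 ≠ 0 := by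
  intro h
  have hs : s ≠ 0 := by
    rintro rfl
    norm_num at h
  -- The quartic is palindromic: in `w = s + 1/s` it becomes `27w² + 17w - 106`,
  -- whose discriminant `11737` is not a square.
  have hw : 27 * (s + s⁻¹) ^ 2 + 17 * (s + s⁻¹) - 106 = 0 := by
    field_simp
    linear_combination h
  have : ¬IsSquare (11737 : ℚ) := by norm_num
  exact this ⟨54 * (s + s⁻¹) + 17, by linear_combination -108 * hw⟩

theorem stmt_8 (a b c : ℚ) (hab : a * b ≠ 0)
    (con1 : a ^ 3 - b ^ 3 - a * b * (1 - c) = 0)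
    (con2 : a ^ 3 + a * b + 2 * b ^ 3 = 0)
    (hextra :
      c = a * b ∨
      a + b ^ 2 = 0 ∨
      a ^ 3 - b ^ 3 * c + a * b * (c ^ 2 - 1) = 0 ∨
      a ^ 3 + 4 * a ^ 6 + 3 * a ^ 5 * b ^ 2 + a ^ 3 * b ^ 3 - c - 4 * a ^ 3 * c +
        6 * a ^ 4 * b * c - 6 * a ^ 2 * b ^ 2 * c - b ^ 3 * c - 3 * a ^ 2 * b ^ 5 * c -
        3 * a ^ 3 * c ^ 2 - 3 * a * b * c ^ 2 - 4 * b ^ 3 * c ^ 2 -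
        a ^ 3 * b ^ 3 * c ^ 2 - 6 * a * b ^ 4 * c ^ 2 - 4 * b ^ 6 * c ^ 2 +
        3 * c ^ 3 + 4 * a ^ 3 * c ^ 3 + 6 * a ^ 2 * b ^ 2 * c ^ 3 + 3 * b ^ 3 * c ^ 3 +
        a ^ 3 * c ^ 4 + 3 * a * b * c ^ 4 + 4 * b ^ 3 * c ^ 4 - 3 * c ^ 5 -
        b ^ 3 * c ^ 5 + c ^ 7 = 0) :
    (a, b, c) = (-1, 1, -1) ∨ (a, b, c) = (-1/3, -1/3, 1) := by
  obtain ⟨p, hp, hD, rfl, rfl, rfl⟩ := exists_param_of_con hab con1 con2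
  have hcube : Odd 3 := by decide
  suffices p ^ 3 + 1 = 0 ∨ p ^ 3 - 1 = 0 by
    rcases this with h | h
    · obtain rfl : p = -1 := hcube.pow_inj.mp (by linear_combination h)
      norm_num
    · obtain rfl : p = 1 := hcube.pow_inj.mp (by linear_combination h)
      norm_num
  rcases hextra with h | h | h | h
  · rw [← sub_eq_zero, c_sub_mul_param hD] at h
    exact .inl (by simpa [hD] using h)
  · rw [add_sq_param hD] at h
    exact .inl (by simpa [hp, hD] using h)
  · rw [cond_iii_param hD] at h
    simpa [hp, hD, or_comm] using h
  · change f₁ _ _ _ = 0 at h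
    rw [f₁_param hD] at h
    simpa [hD, quartic_ne_zero, or_comm] using h
end

section
/- Let a, b, c be rational numbers with a·b ≠ 0 satisfying a³ − b³ − ab(1−c) = 0 and a³ + ab + 2b³ = 0. Set w = 1 + ab, a' = a + b², b' = a² + bc, c' = ab + c², A = w + c' = 1 + 2ab + c², and B = (c' − w)² + 4a'b' = (c² − 1)² + 4(a + b²)(a² + bc). Suppose in addition that at least one of the following holds: w·c' = a'·b', A = 0, B = 0, A² + B = 0, A² + 3B = 0, or 3A² + B = 0. Then (a,b,c) = (−1, 1, −1). -/
lemma aux9_no_sqrt3 (q : ℚ) : q ^ 2 ≠ 3 := by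
  intro h
  have hirr : Irrational (Real.sqrt 3) := by
    simpa using (Nat.Prime.irrational_sqrt (p := 3) (by norm_num))
  have hnn : (0 : ℝ) ≤ ((|q| : ℚ) : ℝ) := by positivity
  have hsq : (((|q| : ℚ) : ℝ)) ^ 2 = 3 := by
    push_cast
    rw [sq_abs]
    exact_mod_cast congrArg (fun x : ℚ => (x : ℝ)) h
  have heq : Real.sqrt 3 = ((|q| : ℚ) : ℝ) := by
    rw [← hsq, Real.sqrt_sq hnn]
  exact hirr ⟨|q|, heq.symm⟩

lemma aux9_b_eq_one (b Q : ℚ) (n : ℕ) (hb : b ≠ 0) (hQ : Q ≠ 0)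
    (h : b ^ n * (b - 1) * ((b ^ 2 + b + 1) * Q) = 0) : b = 1 := by
  have h1 : b ^ n ≠ 0 := pow_ne_zero _ hb
  have h2 : b ^ 2 + b + 1 ≠ 0 := by nlinarith [sq_nonneg (2 * b + 1)]
  rcases mul_eq_zero.mp h with h' | h'
  · rcases mul_eq_zero.mp h' with h'' | h''
    · exact absurd h'' h1
    · linarith
  · rcases mul_eq_zero.mp h' with h'' | h''
    · exact absurd h'' h2
    · exact absurd h'' hQ

lemma aux9_final (a b c : ℚ) (hc : a * c = 2 * a + 3 * b ^ 2)
    (hg : a ^ 3 + a * b + 2 * b ^ 3 = 0) (hb1 : b = 1) :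
    (a, b, c) = (-1, 1, -1) := by
  subst hb1
  have ha : (a + 1) * (a ^ 2 - a + 2) = 0 := by linear_combination hg
  have ha2 : a ^ 2 - a + 2 ≠ 0 := by nlinarith [sq_nonneg (2 * a - 1)]
  have ha1 : a = -1 := by
    rcases mul_eq_zero.mp ha with h | h
    · linarith
    · exact absurd h ha2
  subst ha1
  have hc1 : c = -1 := by linarith
  rw [hc1]

lemma aux9_u_zero (a b c : ℚ) (hb : b ≠ 0) (hc : a * c = 2 * a + 3 * b ^ 2)
    (hg : a ^ 3 + a * b + 2 * b ^ 3 = 0) (hu : a + b ^ 2 = 0) :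
    (a, b, c) = (-1, 1, -1) := by
  have h9 : b ^ 3 * (b - 1) * ((b ^ 2 + b + 1) * 1) = 0 := by
    linear_combination -hg + (a ^ 2 - a * b ^ 2 + b ^ 4 + b) * hu
  exact aux9_final a b c hc hg (aux9_b_eq_one b 1 3 hb one_ne_zero h9)

lemma aux9_P1 (a b c : ℚ) (hb : b ≠ 0) (hc : a * c = 2 * a + 3 * b ^ 2)
    (hg : a ^ 3 + a * b + 2 * b ^ 3 = 0)
    (hP : -3 * a ^ 4 * b - 6 * a ^ 3 * b ^ 3 + 21 * a ^ 3 + 68 * a ^ 2 * b ^ 2 + 75 * a * b ^ 4 + 25 * b ^ 6 = 0) :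
    (a, b, c) = (-1, 1, -1) := by
  have hD : b ^ 9 * (b - 1) * ((b ^ 2 + b + 1) * (50653 * b ^ 6 + 18102 * b ^ 3 + 9261)) = 0 := by
    linear_combination (4942 * a ^ 2 * b ^ 8 + 4369 * a ^ 2 * b ^ 5 + 441 * a ^ 2 * b ^ 2 - 3219 * a * b ^ 10 - 5651 * a * b ^ 7 - 882 * a * b ^ 4 + 1369 * b ^ 12 + 11561 * b ^ 9 + 6133 * b ^ 6 + 441 * b ^ 3) * hP + (14826 * a ^ 3 * b ^ 9 + 13107 * a ^ 3 * b ^ 6 + 1323 * a ^ 3 * b ^ 3 + 19995 * a ^ 2 * b ^ 11 - 94521 * a ^ 2 * b ^ 8 - 91749 * a ^ 2 * b ^ 5 - 9261 * a ^ 2 * b ^ 2 - 15207 * a * b ^ 13 - 282506 * a * b ^ 10 - 178421 * a * b ^ 7 - 11466 * a * b ^ 4 + 8214 * b ^ 15 - 160788 * b ^ 12 - 81083 * b ^ 9 - 10143 * b ^ 6) * hg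
  have hQ : (50653 : ℚ) * b ^ 6 + 18102 * b ^ 3 + 9261 ≠ 0 := by
    nlinarith [sq_nonneg (101306 * b ^ 3 + 18102)]
  exact aux9_final a b c hc hg (aux9_b_eq_one b _ 9 hb hQ hD)

lemma aux9_P2 (a b c : ℚ) (hb : b ≠ 0) (hc : a * c = 2 * a + 3 * b ^ 2)
    (hg : a ^ 3 + a * b + 2 * b ^ 3 = 0)
    (hP : -6 * a ^ 4 * b - 12 * a ^ 3 * b ^ 3 + 17 * a ^ 3 + 61 * a ^ 2 * b ^ 2 + 75 * a * b ^ 4 + 25 * b ^ 6 = 0) :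
    (a, b, c) = (-1, 1, -1) := by
  have hD : b ^ 9 * (b - 1) * ((b ^ 2 + b + 1) * (117649 * b ^ 6 + 40766 * b ^ 3 + 4913)) = 0 := by
    linear_combination (6518 * a ^ 2 * b ^ 8 + 3401 * a ^ 2 * b ^ 5 + 289 * a ^ 2 * b ^ 2 - 4851 * a * b ^ 10 - 4779 * a * b ^ 7 - 578 * a * b ^ 4 + 2401 * b ^ 12 + 13169 * b ^ 9 + 4557 * b ^ 6 + 289 * b ^ 3) * hP + (39108 * a ^ 3 * b ^ 9 + 20406 * a ^ 3 * b ^ 6 + 1734 * a ^ 3 * b ^ 3 + 49110 * a ^ 2 * b ^ 11 - 98668 * a ^ 2 * b ^ 8 - 57817 * a ^ 2 * b ^ 5 - 4913 * a ^ 2 * b ^ 2 - 43806 * a * b ^ 13 - 332573 * a * b ^ 10 - 126218 * a * b ^ 7 - 7803 * a * b ^ 4 + 28812 * b ^ 15 - 203054 * b ^ 12 - 74889 * b ^ 9 - 6069 * b ^ 6) * hg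
  have hQ : (117649 : ℚ) * b ^ 6 + 40766 * b ^ 3 + 4913 ≠ 0 := by
    nlinarith [sq_nonneg (235298 * b ^ 3 + 40766)]
  exact aux9_final a b c hc hg (aux9_b_eq_one b _ 9 hb hQ hD)

lemma aux9_P3 (a b c : ℚ) (hb : b ≠ 0) (hc : a * c = 2 * a + 3 * b ^ 2)
    (hg : a ^ 3 + a * b + 2 * b ^ 3 = 0)
    (hP : -9 * a ^ 4 * b - 18 * a ^ 3 * b ^ 3 + 13 * a ^ 3 + 54 * a ^ 2 * b ^ 2 + 75 * a * b ^ 4 + 25 * b ^ 6 = 0) :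
    (a, b, c) = (-1, 1, -1) := by
  have hD : b ^ 9 * (b - 1) * ((b ^ 2 + b + 1) * (226981 * b ^ 6 + 43654 * b ^ 3 + 2197)) = 0 := by
    linear_combination (8478 * a ^ 2 * b ^ 8 + 2721 * a ^ 2 * b ^ 5 + 169 * a ^ 2 * b ^ 2 - 6771 * a * b ^ 10 - 4259 * a * b ^ 7 - 338 * a * b ^ 4 + 3721 * b ^ 12 + 15449 * b ^ 9 + 3397 * b ^ 6 + 169 * b ^ 3) * hP + (76302 * a ^ 3 * b ^ 9 + 24489 * a ^ 3 * b ^ 6 + 1521 * a ^ 3 * b ^ 3 + 91665 * a ^ 2 * b ^ 11 - 99567 * a ^ 2 * b ^ 8 - 35373 * a ^ 2 * b ^ 5 - 2197 * a ^ 2 * b ^ 2 - 88389 * a * b ^ 13 - 383712 * a * b ^ 10 - 91567 * a * b ^ 7 - 4732 * a * b ^ 4 + 66978 * b ^ 15 - 284776 * b ^ 12 - 63191 * b ^ 9 - 3211 * b ^ 6) * hg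
  have hQ : (226981 : ℚ) * b ^ 6 + 43654 * b ^ 3 + 2197 ≠ 0 := by
    nlinarith [sq_nonneg (453962 * b ^ 3 + 43654)]
  exact aux9_final a b c hc hg (aux9_b_eq_one b _ 9 hb hQ hD)

lemma aux9_P4 (a b c : ℚ) (hb : b ≠ 0) (hc : a * c = 2 * a + 3 * b ^ 2)
    (hg : a ^ 3 + a * b + 2 * b ^ 3 = 0)
    (hP : -12 * a ^ 4 * b - 24 * a ^ 3 * b ^ 3 + 9 * a ^ 3 + 47 * a ^ 2 * b ^ 2 + 75 * a * b ^ 4 + 25 * b ^ 6 = 0) :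
    (a, b, c) = (-1, 1, -1) := by
  have hD : b ^ 9 * (b - 1) * ((b ^ 2 + b + 1) * (389017 * b ^ 6 + 33678 * b ^ 3 + 729)) = 0 := by
    linear_combination (10822 * a ^ 2 * b ^ 8 + 2329 * a ^ 2 * b ^ 5 + 81 * a ^ 2 * b ^ 2 - 8979 * a * b ^ 10 - 4091 * a * b ^ 7 - 162 * a * b ^ 4 + 5329 * b ^ 12 + 18401 * b ^ 9 + 2653 * b ^ 6 + 81 * b ^ 3) * hP + (129864 * a ^ 3 * b ^ 9 + 27948 * a ^ 3 * b ^ 6 + 972 * a ^ 3 * b ^ 3 + 151980 * a ^ 2 * b ^ 11 - 90594 * a ^ 2 * b ^ 8 - 20961 * a ^ 2 * b ^ 5 - 729 * a ^ 2 * b ^ 2 - 151548 * a * b ^ 13 - 435059 * a * b ^ 10 - 72644 * a * b ^ 7 - 2349 * a * b ^ 4 + 127896 * b ^ 15 - 407682 * b ^ 12 - 49637 * b ^ 9 - 1377 * b ^ 6) * hg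
  have hQ : (389017 : ℚ) * b ^ 6 + 33678 * b ^ 3 + 729 ≠ 0 := by
    nlinarith [sq_nonneg (778034 * b ^ 3 + 33678)]
  exact aux9_final a b c hc hg (aux9_b_eq_one b _ 9 hb hQ hD)

lemma aux9_Pf (a b c : ℚ) (hb : b ≠ 0) (hc : a * c = 2 * a + 3 * b ^ 2)
    (hg : a ^ 3 + a * b + 2 * b ^ 3 = 0)
    (hP : 3 * a ^ 2 * b + 6 * a * b ^ 3 + 4 * a + 7 * b ^ 2 = 0) :
    (a, b, c) = (-1, 1, -1) := by
  have hD : b ^ 3 * (b - 1) * ((b ^ 2 + b + 1) * (-432 * b ^ 6 - 288 * b ^ 3 + 16)) = 0 := by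
    linear_combination (36 * a ^ 2 * b ^ 6 + 36 * a ^ 2 * b ^ 3 + 16 * a ^ 2 - 60 * a * b ^ 5 - 28 * a * b ^ 2 + 72 * b ^ 7 + 88 * b ^ 4 + 16 * b) * hP + (-108 * a * b ^ 7 - 108 * a * b ^ 4 - 48 * a * b - 216 * b ^ 9 - 180 * b ^ 6 - 156 * b ^ 3 - 64) * hg
  have hQ : (-432 : ℚ) * b ^ 6 - 288 * b ^ 3 + 16 ≠ 0 := by
    intro h
    exact aux9_no_sqrt3 ((9 * b ^ 3 + 3) / 2) (by linear_combination (-3/64 : ℚ) * h)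
  exact aux9_final a b c hc hg (aux9_b_eq_one b _ 3 hb hQ hD)

theorem stmt_9 (a b c : ℚ) (hab : a * b ≠ 0)
    (con1 : a ^ 3 - b ^ 3 - a * b * (1 - c) = 0)
    (con2 : a ^ 3 + a * b + 2 * b ^ 3 = 0)
    (hextra :
      (1 + a * b) * (a * b + c ^ 2) = (a + b ^ 2) * (a ^ 2 + b * c) ∨
      (1 + a * b) + (a * b + c ^ 2) = 0 ∨
      (c ^ 2 - 1) ^ 2 + 4 * (a + b ^ 2) * (a ^ 2 + b * c) = 0 ∨
      ((1 + a * b) + (a * b + c ^ 2)) ^ 2 +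
        ((c ^ 2 - 1) ^ 2 + 4 * (a + b ^ 2) * (a ^ 2 + b * c)) = 0 ∨
      ((1 + a * b) + (a * b + c ^ 2)) ^ 2 +
        3 * ((c ^ 2 - 1) ^ 2 + 4 * (a + b ^ 2) * (a ^ 2 + b * c)) = 0 ∨
      3 * ((1 + a * b) + (a * b + c ^ 2)) ^ 2 +
        ((c ^ 2 - 1) ^ 2 + 4 * (a + b ^ 2) * (a ^ 2 + b * c)) = 0) :
    (a, b, c) = (-1, 1, -1) := by
  obtain ⟨ha, hb⟩ := mul_ne_zero_iff.mp hab
  have h0 : b * (a * c - (2 * a + 3 * b ^ 2)) = 0 := by linear_combination con1 - con2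
  have hc : a * c = 2 * a + 3 * b ^ 2 := by
    have := (mul_eq_zero.mp h0).resolve_left hb
    linarith
  rcases hextra with h | h | h | h | h | h
  · have key : (a + b ^ 2) * (3 * a ^ 2 * b + 6 * a * b ^ 3 + 4 * a + 7 * b ^ 2) = 0 := by
      linear_combination a ^ 2 * h - (-1 * a ^ 2 + 1 * b) * con2 - (1 * a ^ 2 * b * c + 1 * a ^ 2 * b + 2 * a * b ^ 3 + 1 * a * c + 2 * a + 3 * b ^ 2) * hc
    rcases mul_eq_zero.mp key with hu | hP
    · exact aux9_u_zero a b c hb hc con2 hu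
    · exact aux9_Pf a b c hb hc con2 hP
  · have key : (a + b ^ 2) ^ 2 = 0 := by
      linear_combination (1/5 : ℚ) * (a ^ 2 * h - (2 * b) * con2 - (1 * a * c + 2 * a + 3 * b ^ 2) * hc)
    exact aux9_u_zero a b c hb hc con2 (pow_eq_zero_iff two_ne_zero |>.mp key)
  · have key : (a + b ^ 2) * (-12 * a ^ 4 * b - 24 * a ^ 3 * b ^ 3 + 9 * a ^ 3 + 47 * a ^ 2 * b ^ 2 + 75 * a * b ^ 4 + 25 * b ^ 6) = 0 := by
      linear_combination a ^ 4 * h - (4 * a ^ 4 + 4 * a ^ 3 * b ^ 2 + 4 * a ^ 2 * b * c + 8 * a ^ 2 * b + 4 * a * b ^ 3 * c + 24 * a * b ^ 3 + 2 * a * c ^ 3 - 2 * a * c ^ 2 - 8 * a + 16 * b ^ 5 - 6 * b ^ 2 * c ^ 2 - 6 * b ^ 2 * c - 12 * b ^ 2) * con2 - (1 * a ^ 3 * c ^ 3 + 3 * a ^ 2 * b ^ 2 * c ^ 2 + 12 * a ^ 2 * b ^ 2 * c + 26 * a ^ 2 * b ^ 2 + 9 * a * b ^ 4 * c + 42 *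 a * b ^ 4 - 2 * a * b * c ^ 2 - 2 * a * b * c - 4 * a * b + 19 * b ^ 6 - 4 * b ^ 3 * c ^ 2 - 4 * b ^ 3 * c - 8 * b ^ 3) * hc
    rcases mul_eq_zero.mp key with hu | hP
    · exact aux9_u_zero a b c hb hc con2 hu
    · exact aux9_P4 a b c hb hc con2 hP
  · have key : (a + b ^ 2) * (-6 * a ^ 4 * b - 12 * a ^ 3 * b ^ 3 + 17 * a ^ 3 + 61 * a ^ 2 * b ^ 2 + 75 * a * b ^ 4 + 25 * b ^ 6) = 0 := by
      linear_combination (1/2 : ℚ) * (a ^ 4 * h - (4 * a ^ 4 + 8 * a ^ 3 * b ^ 2 + 4 * a ^ 2 * b * c ^ 2 + 4 * a ^ 2 * b * c + 12 * a ^ 2 * b + 4 * a * b ^ 3 * c + 20 * a * b ^ 3 + 4 * a * c ^ 3 - 32 * a + 8 * b ^ 5 - 12 * b ^ 2 * c ^ 2 - 24 * b ^ 2 * c - 48 * b ^ 2) * con2 - (2 * a ^ 3 * c ^ 3 + 6 * a ^ 2 * b ^ 2 * c ^ 2 + 20 * a ^ 2 * b ^ 2 * c + 60 * a ^ 2 *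 b ^ 2 + 10 * a * b ^ 4 * c + 68 * a * b ^ 4 - 4 * a * b * c ^ 2 - 8 * a * b * c - 16 * a * b + 22 * b ^ 6 - 8 * b ^ 3 * c ^ 2 - 16 * b ^ 3 * c - 32 * b ^ 3) * hc)
    rcases mul_eq_zero.mp key with hu | hP
    · exact aux9_u_zero a b c hb hc con2 hu
    · exact aux9_P2 a b c hb hc con2 hP
  · have key : (a + b ^ 2) * (-9 * a ^ 4 * b - 18 * a ^ 3 * b ^ 3 + 13 * a ^ 3 + 54 * a ^ 2 * b ^ 2 + 75 * a * b ^ 4 + 25 * b ^ 6) = 0 := by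
      linear_combination (1/4 : ℚ) * (a ^ 4 * h - (12 * a ^ 4 + 16 * a ^ 3 * b ^ 2 + 4 * a ^ 2 * b * c ^ 2 + 12 * a ^ 2 * b * c + 28 * a ^ 2 * b + 12 * a * b ^ 3 * c + 68 * a * b ^ 3 + 8 * a * c ^ 3 - 4 * a * c ^ 2 - 48 * a + 40 * b ^ 5 - 24 * b ^ 2 * c ^ 2 - 36 * b ^ 2 * c - 72 * b ^ 2) * con2 - (4 * a ^ 3 * c ^ 3 + 12 * a ^ 2 * b ^ 2 * c ^ 2 + 44 * a ^ 2 * b ^ 2 * c + 112 * a ^ 2 * b ^ 2 + 28 * a * b ^ 4 * c + 152 * a * b ^ 4 - 8 * a * b * c ^ 2 - 12 * a * b * c - 24 * a * b + 60 * b ^ 6 - 16 * b ^ 3 * c ^ 2 - 24 * b ^ 3 * c - 48 * b ^ 3) * hc)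
    rcases mul_eq_zero.mp key with hu | hP
    · exact aux9_u_zero a b c hb hc con2 hu
    · exact aux9_P3 a b c hb hc con2 hP
  · have key : (a + b ^ 2) * (-3 * a ^ 4 * b - 6 * a ^ 3 * b ^ 3 + 21 * a ^ 3 + 68 * a ^ 2 * b ^ 2 + 75 * a * b ^ 4 + 25 * b ^ 6) = 0 := by
      linear_combination (1/4 : ℚ) * (a ^ 4 * h - (4 * a ^ 4 + 16 * a ^ 3 * b ^ 2 + 12 * a ^ 2 * b * c ^ 2 + 4 * a ^ 2 * b * c + 20 * a ^ 2 * b + 4 * a * b ^ 3 * c + 12 * a * b ^ 3 + 8 * a * c ^ 3 + 4 * a * c ^ 2 - 80 * a - 8 * b ^ 5 - 24 * b ^ 2 * c ^ 2 - 60 * b ^ 2 * c - 120 * b ^ 2) * con2 - (4 * a ^ 3 * c ^ 3 + 12 * a ^ 2 * b ^ 2 * c ^ 2 + 36 * a ^ 2 * b ^ 2 * c + 128 * a ^ 2 * b ^ 2 + 12 * a * b ^ 4 * c + 120 * a * b ^ 4 - 8 * a * b * c ^ 2 - 20 * a * b * c - 40 * a * b + 28 * b ^ 6 - 16 * b ^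 3 * c ^ 2 - 40 * b ^ 3 * c - 80 * b ^ 3) * hc)
    rcases mul_eq_zero.mp key with hu | hP
    · exact aux9_u_zero a b c hb hc con2 hu
    · exact aux9_P1 a b c hb hc con2 hP
end

section
/- Let a, b, c be rational numbers with a·b ≠ 0 satisfying a³ − b³ − ab(1−c) = 0 and (a⁴b + ab⁴)² = (a⁵ + b⁴)(b⁵ + a⁴c). Then (a² − b)·(a⁹ + a⁴b⁴ + a³b⁶ + b⁹) = 0. Moreover, if in addition b = a², then c = a³ (so the signature [1,a,b,c] is the degenerate signature [1,a,a²,a³]). -/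
theorem stmt_10 (a b c : ℚ) (hab : a * b ≠ 0)
    (con1 : a ^ 3 - b ^ 3 - a * b * (1 - c) = 0)
    (con2 : (a ^ 4 * b + a * b ^ 4) ^ 2 = (a ^ 5 + b ^ 4) * (b ^ 5 + a ^ 4 * c)) :
    (a ^ 2 - b) * (a ^ 9 + a ^ 4 * b ^ 4 + a ^ 3 * b ^ 6 + b ^ 9) = 0 ∧
    (b = a ^ 2 → c = a ^ 3) := by
  have ha : a ≠ 0 := fun h => hab (by rw [h]; ring)
  constructor
  · linear_combination b * con2 + a ^ 3 * (a ^ 5 + b ^ 4) * con1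
  · intro hb
    subst hb
    have h3 : a ^ 3 ≠ 0 := pow_ne_zero 3 ha
    have h : a ^ 3 * c = a ^ 3 * a ^ 3 := by linear_combination con1
    exact mul_left_cancel₀ h3 h
end

section
/- Let a be a rational number with a ≠ 0 and a ≠ −1, and set w = 3a³ + 4, x = a⁴ − a − 2/a², y = −a² + 1/a + 1/a⁴, z = a³ + 3. Then condition T(w,x,y,z) fails (i.e., zw + w² ≠ 0, xy + z² + zw + w² ≠ 0, 2xy + z² + w² ≠ 0, 3xy + z² − zw + w² ≠ 0, 4xy + z² − 2zw + w² ≠ 0, and xy ≠ wz) and condition S(w,x,y,z) fails (i.e., not (x² = wy and y² = xz), not (x = 0 and y = 0), not (w = y and x = 0 and z = 0), not (w + y = 0 and x = 0 and z = 0), not (w = x and w + y = 0 and w + z = 0), and not (w + x = 0 and w + y = 0 and w = z)). -/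
/-- Condition S: the normalized signature `[w,x,y,z]` is degenerate,
generalized equality, or affine. -/
def condS (w x y z : ℚ) : Prop :=
  (x ^ 2 = w * y ∧ y ^ 2 = x * z) ∨
  (x = 0 ∧ y = 0) ∨
  (w = y ∧ x = 0 ∧ z = 0) ∨
  (w + y = 0 ∧ x = 0 ∧ z = 0) ∨
  (w = x ∧ w + y = 0 ∧ w + z = 0) ∨
  (w + x = 0 ∧ w + y = 0 ∧ w = z)

/-- Condition T: the gadget `G₁` fails to work on the normalized signature `[w,x,y,z]`. -/
def condT (w x y z : ℚ) : Prop :=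
  z * w + w ^ 2 = 0 ∨
  x * y + z ^ 2 + z * w + w ^ 2 = 0 ∨
  2 * x * y + z ^ 2 + w ^ 2 = 0 ∨
  3 * x * y + z ^ 2 - z * w + w ^ 2 = 0 ∨
  4 * x * y + z ^ 2 - 2 * z * w + w ^ 2 = 0 ∨
  x * y = w * z

/-!
After clearing denominators, each clause of `condT` and `condS` either is elementary to exclude
or forces one of eight integer polynomials in `a³` to vanish at `a`. None of these polynomials
has a root modulo the prime `73`, and their leading coefficients are prime to `73`. This rules
out rational roots: writing a root as `n / d` in lowest terms, the homogenized equation modulo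
`73` forces `73 ∣ n` whenever `73 ∣ d`, so `d` is invertible modulo `73` and `n / d` reduces to a
root modulo `73`.
-/

open Polynomial

theorem Polynomial.aeval_rat_ne_zero_of_forall_aeval_zmod_ne_zero {p : ℕ} [Fact p.Prime]
    {P : ℤ[X]} {n : ℕ} (hdeg : P.natDegree ≤ n) (hlc : (P.coeff n : ZMod p) ≠ 0)
    (hroot : ∀ x : ZMod p, aeval x P ≠ 0) (r : ℚ) : aeval r P ≠ 0 := by
  intro h
  set φ := algebraMap ℤ (ZMod p)
  have hlc' : φ P.leadingCoeff ≠ 0 := by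
    rwa [leadingCoeff, natDegree_eq_of_le_of_coeff_ne_zero hdeg fun h0 => hlc (by simp [h0])]
  have hint : (P.scaleRoots r.den).eval r.num = 0 := by
    have := scaleRoots_aeval_eq_zero (r := (r.den : ℤ)) h
    rw [algebraMap_int_eq, eq_intCast, Int.cast_natCast, Rat.den_mul_eq_num, aeval_def,
      eval₂_at_intCast] at this
    simpa using this
  have hmod : ((P.map φ).scaleRoots (r.den : ZMod p)).eval (r.num : ZMod p) = 0 := by
    have := congrArg φ hint
    rw [← eval₂_hom, ← eval_map, map_scaleRoots _ _ _ hlc'] at this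
    simpa [φ] using this
  by_cases hden : (r.den : ZMod p) = 0
  · have hnum : (r.num : ZMod p) = 0 := by
      rw [hden, scaleRoots_zero, eval_smul, eval_X_pow, smul_eq_mul, mul_eq_zero,
        leadingCoeff_map_of_leadingCoeff_ne_zero _ hlc'] at hmod
      exact eq_zero_of_pow_eq_zero (hmod.resolve_left hlc')
    rw [ZMod.natCast_eq_zero_iff] at hden
    rw [ZMod.intCast_zmod_eq_zero_iff_dvd] at hnum
    exact (Fact.out : p.Prime).ne_one
      (Nat.eq_one_of_dvd_coprimes r.reduced (Int.ofNat_dvd_left.mp hnum) hden)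
  · apply hroot (r.num / r.den)
    rw [← eval_map_algebraMap]
    have := scaleRoots_eval_mul (P.map φ) (r.num / r.den) (r.den : ZMod p)
    rw [mul_div_cancel₀ _ hden, hmod, eq_comm, mul_eq_zero] at this
    exact this.resolve_left (pow_ne_zero _ hden)

instance Nat.fact_prime_seventy_three : Fact (Nat.Prime 73) := ⟨by norm_num⟩

namespace G4

/- The signature `[w, x, y, z]` produced by the gadget `G₄` from `[1, a, -1/a, 0]`. -/
def w (a : ℚ) : ℚ := 3 * a ^ 3 + 4
def x (a : ℚ) : ℚ := a ^ 4 - a - 2 / a ^ 2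
def y (a : ℚ) : ℚ := -a ^ 2 + 1 / a + 1 / a ^ 4
def z (a : ℚ) : ℚ := a ^ 3 + 3

variable {a : ℚ}

theorem w_ne_zero (a : ℚ) : w a ≠ 0 := by
  intro h
  simp only [w] at h
  refine aeval_rat_ne_zero_of_forall_aeval_zmod_ne_zero (p := 73)
    (P := 3 * X ^ 3 + 4) (by compute_degree!)
    (by simp +decide) (by simp +decide [map_ofNat]) a ?_
  simp only [map_add, map_mul, map_pow, map_ofNat, aeval_X]
  linear_combination h

theorem w_add_z_ne_zero (a : ℚ) : w a + z a ≠ 0 := by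
  intro h
  simp only [w, z] at h
  refine aeval_rat_ne_zero_of_forall_aeval_zmod_ne_zero (p := 73)
    (P := 4 * X ^ 3 + 7) (by compute_degree!)
    (by simp +decide) (by simp +decide [map_ofNat]) a ?_
  simp only [map_add, map_mul, map_pow, map_ofNat, aeval_X]
  linear_combination h

theorem y_ne_zero (ha : a ≠ 0) : y a ≠ 0 := by
  intro h
  simp only [y] at h
  field_simp at h
  refine aeval_rat_ne_zero_of_forall_aeval_zmod_ne_zero (p := 73)
    (P := X ^ 6 - X ^ 3 - 1) (by compute_degree!)
    (by simp +decide [coeff_one]) (by simp +decide) a ?_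
  simp only [map_sub, map_pow, map_one, aeval_X]
  linear_combination -h

theorem x_mul_y_ne_w_mul_z (ha : a ≠ 0) : x a * y a ≠ w a * z a := by
  intro h
  simp only [x, y, w, z] at h
  field_simp at h
  refine aeval_rat_ne_zero_of_forall_aeval_zmod_ne_zero (p := 73)
    (P := 4 * X ^ 12 + 11 * X ^ 9 + 10 * X ^ 6 + 3 * X ^ 3 + 2) (by compute_degree!)
    (by simp +decide) (by simp +decide [map_ofNat]) a ?_
  simp only [map_add, map_mul, map_pow, map_ofNat, aeval_X]
  linear_combination -h

theorem x_ne_zero_of_z_eq_zero (ha : a ≠ 0) (hz : z a = 0) : x a ≠ 0 := by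
  intro hx
  simp only [x, z] at hx hz
  field_simp at hx
  have h10 : (10 : ℚ) = 0 := by linear_combination hx - (a ^ 3 - 4) * hz
  norm_num at h10

theorem w_add_y_ne_zero_of_w_eq_z (ha : a ≠ 0) (hwz : w a = z a) : w a + y a ≠ 0 := by
  intro hwy
  simp only [w, y, z] at hwy hwz
  field_simp at hwy
  have h : 5 / 2 * a ^ 4 + 1 / 4 = 0 := by
    linear_combination hwy - (3 / 2 * a ^ 4 - 1 / 2 * a ^ 3 + 3 / 4) * hwz
  exact (by positivity : (0 : ℚ) < 5 / 2 * a ^ 4 + 1 / 4).ne' h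

theorem not_degenerate (ha : a ≠ 0) : ¬ (x a ^ 2 = w a * y a ∧ y a ^ 2 = x a * z a) := by
  rintro ⟨hx, hy⟩
  have hxy : x a * y a * (x a * y a - w a * z a) = 0 := by
    linear_combination y a ^ 2 * hx + w a * y a * hy
  rcases mul_eq_zero.1 hxy with hxy | hxy
  · rcases mul_eq_zero.1 hxy with hx0 | hy0
    · exact mul_ne_zero (w_ne_zero a) (y_ne_zero ha) (by rw [← hx, hx0]; ring)
    · exact y_ne_zero ha hy0
  · exact x_mul_y_ne_w_mul_z ha (sub_eq_zero.1 hxy)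

theorem not_condS (ha : a ≠ 0) : ¬ condS (w a) (x a) (y a) (z a) := by
  rintro (hdeg | ⟨-, hy⟩ | ⟨-, hx, hz⟩ | ⟨-, hx, hz⟩ | ⟨-, -, hwz⟩ | ⟨-, hwy, hwz⟩)
  · exact not_degenerate ha hdeg
  · exact y_ne_zero ha hy
  · exact x_ne_zero_of_z_eq_zero ha hz hx
  · exact x_ne_zero_of_z_eq_zero ha hz hx
  · exact w_add_z_ne_zero a hwz
  · exact w_add_y_ne_zero_of_w_eq_z ha hwz hwy

theorem not_condT (ha : a ≠ 0) : ¬ condT (w a) (x a) (y a) (z a) := by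
  rintro (h | h | h | h | h | h)
  · rcases mul_eq_zero.1 (by linear_combination h : w a * (w a + z a) = 0) with h | h
    exacts [w_ne_zero a h, w_add_z_ne_zero a h]
  · simp only [x, y, w, z] at h
    field_simp at h
    refine aeval_rat_ne_zero_of_forall_aeval_zmod_ne_zero (p := 73)
      (P := 12 * X ^ 12 + 45 * X ^ 9 + 39 * X ^ 6 - 3 * X ^ 3 - 2) (by compute_degree!)
      (by simp +decide) (by simp +decide [map_ofNat]) a ?_
    simp only [map_add, map_sub, map_mul, map_pow, map_ofNat, aeval_X]
    linear_combination h
  · simp only [x, y, w, z] at h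
    field_simp at h
    refine aeval_rat_ne_zero_of_forall_aeval_zmod_ne_zero (p := 73)
      (P := 8 * X ^ 12 + 34 * X ^ 9 + 29 * X ^ 6 - 6 * X ^ 3 - 4) (by compute_degree!)
      (by simp +decide) (by simp +decide [map_ofNat]) a ?_
    simp only [map_add, map_sub, map_mul, map_pow, map_ofNat, aeval_X]
    linear_combination h
  · simp only [x, y, w, z] at h
    field_simp at h
    refine aeval_rat_ne_zero_of_forall_aeval_zmod_ne_zero (p := 73)
      (P := 4 * X ^ 12 + 23 * X ^ 9 + 19 * X ^ 6 - 9 * X ^ 3 - 6) (by compute_degree!)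
      (by simp +decide) (by simp +decide [map_ofNat]) a ?_
    simp only [map_add, map_sub, map_mul, map_pow, map_ofNat, aeval_X]
    linear_combination h
  · simp only [x, y, w, z] at h
    field_simp at h
    refine aeval_rat_ne_zero_of_forall_aeval_zmod_ne_zero (p := 73)
      (P := 12 * X ^ 9 + 9 * X ^ 6 - 12 * X ^ 3 - 8) (by compute_degree!)
      (by simp +decide) (by simp +decide [map_ofNat]) a ?_
    simp only [map_add, map_sub, map_mul, map_pow, map_ofNat, aeval_X]
    linear_combination h
  · exact x_mul_y_ne_w_mul_z ha h

end G4

theorem stmt_11_general (a : ℚ) (ha : a ≠ 0) :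
    ¬ condT (3 * a ^ 3 + 4) (a ^ 4 - a - 2 / a ^ 2) (-a ^ 2 + 1 / a + 1 / a ^ 4) (a ^ 3 + 3) ∧
    ¬ condS (3 * a ^ 3 + 4) (a ^ 4 - a - 2 / a ^ 2) (-a ^ 2 + 1 / a + 1 / a ^ 4) (a ^ 3 + 3) :=
  ⟨G4.not_condT ha, G4.not_condS ha⟩

theorem stmt_11 (a : ℚ) (ha : a ≠ 0) (ha' : a ≠ -1) :
    ¬ condT (3 * a ^ 3 + 4) (a ^ 4 - a - 2 / a ^ 2) (-a ^ 2 + 1 / a + 1 / a ^ 4) (a ^ 3 + 3) ∧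
    ¬ condS (3 * a ^ 3 + 4) (a ^ 4 - a - 2 / a ^ 2) (-a ^ 2 + 1 / a + 1 / a ^ 4) (a ^ 3 + 3) :=
  stmt_11_general a ha
end

section
/- Let a be a rational number with a ≠ 0 and a ≠ −1, and set w = 3a³ + 1, x = a⁴ + a, y = a², z = a³. Then condition T(w,x,y,z) fails (i.e., zw + w² ≠ 0, xy + z² + zw + w² ≠ 0, 2xy + z² + w² ≠ 0, 3xy + z² − zw + w² ≠ 0, 4xy + z² − 2zw + w² ≠ 0, and xy ≠ wz) and condition S(w,x,y,z) fails (i.e., not (x² = wy and y² = xz), not (x = 0 and y = 0), not (w = y and x = 0 and z = 0), not (w + y = 0 and x = 0 and z = 0), not (w = x and w + y = 0 and w + z = 0), and not (w + x = 0 and w + y = 0 and w = z)). -/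
/-- No rational cube equals `-1/c` for `2 ≤ c < 8`. -/
lemma aux_cube_ne (c : ℤ) (hc : 2 ≤ c) (h8 : c < 8) (a : ℚ)
    (h : (c : ℚ) * a ^ 3 = -1) : False := by
  have hc0 : (c : ℚ) ≠ 0 := by
    exact_mod_cast (by omega : c ≠ 0)
  have h1 : a ^ 3 = ((-1 : ℤ) : ℚ) / (c : ℚ) := by
    rw [eq_div_iff hc0]; push_cast; linarith
  have hcop : Nat.Coprime (Int.natAbs (-1)) c.natAbs := by simp
  have hden : (((a ^ 3).den : ℤ)) = c := by
    rw [h1]; exact Rat.den_div_eq_of_coprime (by omega) hcop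
  have hden' : ((a.den : ℤ)) ^ 3 = c := by
    rw [← hden, Rat.den_pow]; push_cast; ring
  have hd1 : 1 ≤ a.den := a.pos
  rcases le_or_gt a.den 1 with h' | h'
  · have he : a.den = 1 := le_antisymm h' hd1
    rw [he] at hden'
    norm_num at hden'
    omega
  · have h2 : (2 : ℤ) ≤ (a.den : ℤ) := by exact_mod_cast h'
    have h8' : (2 : ℤ) ^ 3 ≤ (a.den : ℤ) ^ 3 := pow_le_pow_left₀ (by norm_num) h2 3
    omega

/-- No rational square equals a nonsquare integer. -/
lemma aux_sq_ne (k : ℤ) (hk : ∀ n : ℤ, n ^ 2 ≠ k) (r : ℚ)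
    (h : r ^ 2 = (k : ℚ)) : False := by
  have hden : r.den ^ 2 = 1 := by
    rw [← Rat.den_pow, h, Rat.den_intCast]
  have hd1 : r.den = 1 := by nlinarith [r.pos]
  have hr : (r.num : ℚ) = r := (Rat.den_eq_one_iff r).mp hd1
  have : (r.num : ℚ) ^ 2 = (k : ℚ) := by rw [hr]; exact h
  exact hk r.num (by exact_mod_cast this)

lemma aux_nonsq8 : ∀ n : ℤ, n ^ 2 ≠ 8 := by
  intro n h
  have h1 : n ≤ 6 := by nlinarith [sq_nonneg (n - 6)]
  have h2 : -6 ≤ n := by nlinarith [sq_nonneg (n + 6)]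
  interval_cases n <;> norm_num at h

lemma aux_nonsq24 : ∀ n : ℤ, n ^ 2 ≠ 24 := by
  intro n h
  have h1 : n ≤ 6 := by nlinarith [sq_nonneg (n - 6)]
  have h2 : -6 ≤ n := by nlinarith [sq_nonneg (n + 6)]
  interval_cases n <;> norm_num at h

lemma aux_nonsq32 : ∀ n : ℤ, n ^ 2 ≠ 32 := by
  intro n h
  have h1 : n ≤ 6 := by nlinarith [sq_nonneg (n - 6)]
  have h2 : -6 ≤ n := by nlinarith [sq_nonneg (n + 6)]
  interval_cases n <;> norm_num at h

theorem stmt_12 (a : ℚ) (ha : a ≠ 0) (ha' : a ≠ -1) :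
    ¬ condT (3 * a ^ 3 + 1) (a ^ 4 + a) (a ^ 2) (a ^ 3) ∧
    ¬ condS (3 * a ^ 3 + 1) (a ^ 4 + a) (a ^ 2) (a ^ 3) := by
  constructor
  · intro hT
    unfold condT at hT
    rcases hT with h | h | h | h | h | h
    · have h' : (3 * a ^ 3 + 1) * (4 * a ^ 3 + 1) = 0 := by linear_combination h
      rcases mul_eq_zero.mp h' with h1 | h1
      · exact aux_cube_ne 3 (by norm_num) (by norm_num) a (by push_cast; linarith)
      · exact aux_cube_ne 4 (by norm_num) (by norm_num) a (by push_cast; linarith)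
    · have h' : (28 * a ^ 3 + 8) ^ 2 = ((8 : ℤ) : ℚ) := by
        push_cast; linear_combination 56 * h
      exact aux_sq_ne 8 aux_nonsq8 _ h'
    · have h' : (2 * a ^ 3 + 1) * (6 * a ^ 3 + 1) = 0 := by linear_combination h
      rcases mul_eq_zero.mp h' with h1 | h1
      · exact aux_cube_ne 2 (by norm_num) (by norm_num) a (by push_cast; linarith)
      · exact aux_cube_ne 6 (by norm_num) (by norm_num) a (by push_cast; linarith)
    · have h' : (20 * a ^ 3 + 8) ^ 2 = ((24 : ℤ) : ℚ) := by
        push_cast; linear_combination 40 * h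
      exact aux_sq_ne 24 aux_nonsq24 _ h'
    · have h' : (16 * a ^ 3 + 8) ^ 2 = ((32 : ℤ) : ℚ) := by
        push_cast; linear_combination 32 * h
      exact aux_sq_ne 32 aux_nonsq32 _ h'
    · have h6 : a ^ 6 = 0 := by linear_combination (-1 / 2 : ℚ) * h
      exact ha (pow_eq_zero_iff (by norm_num : (6 : ℕ) ≠ 0) |>.mp h6)
  · intro hS
    unfold condS at hS
    rcases hS with ⟨h1, h2⟩ | ⟨h1, h2⟩ | ⟨h1, h2, h3⟩ | ⟨h1, h2, h3⟩ | ⟨h1, h2, h3⟩ |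
      ⟨h1, h2, h3⟩
    · have h7 : a ^ 7 = 0 := by linear_combination -h2
      exact ha (pow_eq_zero_iff (by norm_num : (7 : ℕ) ≠ 0) |>.mp h7)
    · exact ha (pow_eq_zero_iff (by norm_num : (2 : ℕ) ≠ 0) |>.mp h2)
    · exact ha (pow_eq_zero_iff (by norm_num : (3 : ℕ) ≠ 0) |>.mp h3)
    · exact ha (pow_eq_zero_iff (by norm_num : (3 : ℕ) ≠ 0) |>.mp h3)
    · exact aux_cube_ne 4 (by norm_num) (by norm_num) a (by push_cast; linarith)
    · exact aux_cube_ne 2 (by norm_num) (by norm_num) a (by push_cast; linarith)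
end

section
/- Let a be a rational number with a ≠ 0 and a ≠ −1, and set w = 3a³ + 1, x = a⁴ + a, y = a², z = a³ + 1. Then condition T(w,x,y,z) fails (i.e., zw + w² ≠ 0, xy + z² + zw + w² ≠ 0, 2xy + z² + w² ≠ 0, 3xy + z² − zw + w² ≠ 0, 4xy + z² − 2zw + w² ≠ 0, and xy ≠ wz) and condition S(w,x,y,z) fails (i.e., not (x² = wy and y² = xz), not (x = 0 and y = 0), not (w = y and x = 0 and z = 0), not (w + y = 0 and x = 0 and z = 0), not (w = x and w + y = 0 and w + z = 0), and not (w + x = 0 and w + y = 0 and w = z)). -/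
lemma nat_cube_ne (n d : ℕ) (h2 : 2 ≤ d) (h7 : d ≤ 7) : n ^ 3 ≠ d := by
  rcases le_or_gt n 1 with h | h
  · intro hc; nlinarith [pow_le_pow_left₀ (Nat.zero_le n) h 3]
  · intro hc; nlinarith [Nat.pow_le_pow_left h 3]

lemma cube_den_ne (a : ℚ) (q : ℚ) (h2 : 2 ≤ q.den) (h7 : q.den ≤ 7) :
    a ^ 3 ≠ q := by
  intro h
  exact nat_cube_ne a.den q.den h2 h7 (by rw [← Rat.den_pow, h])

lemma cube2 (a : ℚ) : 2 * a ^ 3 + 1 ≠ 0 := by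
  intro h
  have : a ^ 3 = (-1 : ℚ) / 2 := by linarith
  exact cube_den_ne a ((-1 : ℚ)/2) (by norm_num) (by norm_num) this

lemma cube3 (a : ℚ) : 3 * a ^ 3 + 1 ≠ 0 := by
  intro h
  have : a ^ 3 = (-1 : ℚ) / 3 := by linarith
  exact cube_den_ne a ((-1 : ℚ)/3) (by norm_num) (by norm_num) this

lemma cube5 (a : ℚ) : 5 * a ^ 3 + 1 ≠ 0 := by
  intro h
  have : a ^ 3 = (-1 : ℚ) / 5 := by linarith
  exact cube_den_ne a ((-1 : ℚ)/5) (by norm_num) (by norm_num) this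

lemma cube7 (a : ℚ) : 7 * a ^ 3 + 3 ≠ 0 := by
  intro h
  have : a ^ 3 = (-3 : ℚ) / 7 := by linarith
  exact cube_den_ne a ((-3 : ℚ)/7) (by norm_num) (by norm_num) this

theorem stmt_13 (a : ℚ) (ha : a ≠ 0) (ha' : a ≠ -1) :
    ¬ condT (3 * a ^ 3 + 1) (a ^ 4 + a) (a ^ 2) (a ^ 3 + 1) ∧
    ¬ condS (3 * a ^ 3 + 1) (a ^ 4 + a) (a ^ 2) (a ^ 3 + 1) := by
  have h2 := cube2 a
  have h3 := cube3 a
  have h5 := cube5 a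
  have h7 := cube7 a
  have hz : a ^ 3 + 1 ≠ 0 := by
    intro h
    have hq : a ^ 2 - a + 1 > 0 := by nlinarith [sq_nonneg (a - 1), sq_nonneg a]
    have : (a + 1) * (a ^ 2 - a + 1) = 0 := by ring_nf; linarith [h]
    rcases mul_eq_zero.mp this with h1 | h1
    · exact ha' (by linarith)
    · linarith
  have hpos : a ^ 6 + a ^ 3 + 1 > 0 := by nlinarith [sq_nonneg (a ^ 3 - 1), sq_nonneg (a ^ 3)]
  constructor
  · rintro (h | h | h | h | h | h)
    · -- (3a³+1)·2·(2a³+1) = 0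
      have : (3 * a ^ 3 + 1) * (2 * (2 * a ^ 3 + 1)) = 0 := by ring_nf; ring_nf at h; linarith
      rcases mul_eq_zero.mp this with h1 | h1
      · exact h3 h1
      · exact h2 (by linarith)
    · have : (2 * a ^ 3 + 1) * (7 * a ^ 3 + 3) = 0 := by ring_nf; ring_nf at h; linarith
      rcases mul_eq_zero.mp this with h1 | h1
      · exact h2 h1
      · exact h7 h1
    · have : (3 * a ^ 3 + 1) * (2 * (2 * a ^ 3 + 1)) = 0 := by ring_nf; ring_nf at h; linarith
      rcases mul_eq_zero.mp this with h1 | h1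
      · exact h3 h1
      · exact h2 (by linarith)
    · have : (2 * a ^ 3 + 1) * (5 * a ^ 3 + 1) = 0 := by ring_nf; ring_nf at h; linarith
      rcases mul_eq_zero.mp this with h1 | h1
      · exact h2 h1
      · exact h5 h1
    · have : 4 * a ^ 3 * (2 * a ^ 3 + 1) = 0 := by ring_nf; ring_nf at h; linarith
      rcases mul_eq_zero.mp this with h1 | h1
      · exact ha (by simpa using pow_eq_zero_iff (n := 3) (by norm_num) |>.mp (by linarith))
      · exact h2 h1
    · have : (a ^ 3 + 1) * (2 * a ^ 3 + 1) = 0 := by ring_nf; ring_nf at h; linarith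
      rcases mul_eq_zero.mp this with h1 | h1
      · exact hz h1
      · exact h2 h1
  · rintro (⟨h1, h⟩ | ⟨h1, h⟩ | ⟨h1, h, h'⟩ | ⟨h1, h, h'⟩ | ⟨h1, h, h'⟩ | ⟨h1, h, h'⟩)
    · -- y² = xz : a⁴ = (a⁴+a)(a³+1) → a(a⁶+a³+1)=0
      have : a * (a ^ 6 + a ^ 3 + 1) = 0 := by ring_nf; ring_nf at h; linarith
      rcases mul_eq_zero.mp this with hh | hh
      · exact ha hh
      · linarith
    · exact ha (pow_eq_zero_iff (n := 2) (by norm_num) |>.mp h)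
    · exact hz h'
    · exact hz h'
    · -- w + z = 4a³ + 2 = 0
      have : 2 * a ^ 3 + 1 = 0 := by linarith
      exact h2 this
    · -- w = z → 2a³ = 0
      have : a ^ 3 = 0 := by linarith
      exact ha (pow_eq_zero_iff (n := 3) (by norm_num) |>.mp this)
end

section
/- Let a be a rational number with a ≠ 0, a ≠ 1, and a ≠ −1. Then the 2×2 matrices over ℚ satisfy the identity [[2a³ + 1 − a⁻³, −a − a⁻²], [a² + a⁻¹, a³ − 1 − 2a⁻³]] · [[a⁻², a], [1, 1]] = [[a⁻², a], [1, 1]] · [[a³ − a⁻³, 0], [0, 2a³ − 2a⁻³]]; moreover the matrix [[a⁻², a], [1, 1]] is invertible (its determinant a⁻² − a is nonzero), and the two diagonal entries a³ − a⁻³ and 2a³ − 2a⁻³ are nonzero and distinct. -/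
theorem stmt_14 (a : ℚ) (ha : a ≠ 0) (ha1 : a ≠ 1) (ha2 : a ≠ -1) :
    (!![2 * a ^ 3 + 1 - a⁻¹ ^ 3, -a - a⁻¹ ^ 2;
        a ^ 2 + a⁻¹, a ^ 3 - 1 - 2 * a⁻¹ ^ 3] : Matrix (Fin 2) (Fin 2) ℚ) *
        !![a⁻¹ ^ 2, a; 1, 1] =
      !![a⁻¹ ^ 2, a; 1, 1] *
        !![a ^ 3 - a⁻¹ ^ 3, 0; 0, 2 * a ^ 3 - 2 * a⁻¹ ^ 3] ∧
    (!![a⁻¹ ^ 2, a; 1, 1] : Matrix (Fin 2) (Fin 2) ℚ).det ≠ 0 ∧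
    a ^ 3 - a⁻¹ ^ 3 ≠ 0 ∧
    2 * a ^ 3 - 2 * a⁻¹ ^ 3 ≠ 0 ∧
    a ^ 3 - a⁻¹ ^ 3 ≠ 2 * a ^ 3 - 2 * a⁻¹ ^ 3 := by
  have h1 : a - 1 ≠ 0 := sub_ne_zero.mpr ha1
  have h2 : a + 1 ≠ 0 := by intro h; apply ha2; linarith
  have hpos : (0:ℚ) < a^4 + a^2 + 1 := by positivity
  have h6 : a ^ 6 - 1 ≠ 0 := by
    have h : (a-1)*(a+1)*(a^4+a^2+1) = a^6 - 1 := by ring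
    rw [← h]
    exact mul_ne_zero (mul_ne_zero h1 h2) (ne_of_gt hpos)
  have key : a ^ 3 - a⁻¹ ^ 3 ≠ 0 := by
    intro h
    apply h6
    field_simp at h
    nlinarith [h]
  have h3 : a ^ 3 - 1 ≠ 0 := by
    have h : (a-1)*(a^2+a+1) = a^3 - 1 := by ring
    have hp : (0:ℚ) < a^2 + a + 1 := by nlinarith [sq_nonneg (a + 1/2)]
    rw [← h]; exact mul_ne_zero h1 (ne_of_gt hp)
  refine ⟨?_, ?_, key, ?_, ?_⟩
  · ext i j
    fin_cases i <;> fin_cases j <;>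
      simp [Matrix.mul_apply, Fin.sum_univ_two] <;> field_simp <;> ring
  · rw [Matrix.det_fin_two_of]
    intro h
    apply h3
    field_simp at h
    nlinarith [h]
  · intro h; apply key; linarith
  · intro h; apply key; linarith
end
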